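/- arXiv:1509.08146 — 5 statements merged into one kernel-verified Lean document; each statement's English description precedes it below -/
import Mathlib

section
/- For a positive definite covariance matrix C ∈ ℝ^{m×m}, observation matrix O ∈ ℝ^{p×m}, and σ > 0, we have log det(C - C Oᵀ (O C Oᵀ + σ² I)⁻¹ O C) = 2m log σ - log det(Oᵀ O + σ² C⁻¹). -/
/-!
By the Woodbury identity, with noise covariance `R = σ² I`,
`C - C Oᵀ (O C Oᵀ + R)⁻¹ O C = (C⁻¹ + Oᵀ R⁻¹ O)⁻¹ = σ² (Oᵀ O + σ² C⁻¹)⁻¹`.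
Since `B = Oᵀ O + σ² C⁻¹` is positive definite, `det B > 0`, so the logarithm of
`det (σ² B⁻¹) = σ^(2m) / det B` splits into `2 m log σ - log det B`.
-/

open Matrix

namespace Matrix

variable {n p α : Type*} [Fintype n] [DecidableEq n] [Fintype p] [DecidableEq p]

theorem inv_add_mul_inv_mul_eq_sub [CommRing α] (C : Matrix n n α) (U : Matrix n p α)
    (R : Matrix p p α) (V : Matrix p n α) (hC : IsUnit C) (hR : IsUnit R)
    (hS : IsUnit (V * C * U + R)) :
    (C⁻¹ + U * R⁻¹ * V)⁻¹ = C - C * U * (V * C * U + R)⁻¹ * V * C := by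
  have hCC : C⁻¹⁻¹ = C := nonsing_inv_nonsing_inv C ((isUnit_iff_isUnit_det C).1 hC)
  have hRR : R⁻¹⁻¹ = R := nonsing_inv_nonsing_inv R ((isUnit_iff_isUnit_det R).1 hR)
  have := add_mul_mul_inv_eq_sub C⁻¹ U R⁻¹ V (isUnit_nonsing_inv_iff.2 hC)
    (isUnit_nonsing_inv_iff.2 hR) (by rwa [hCC, hRR, add_comm])
  rwa [hCC, hRR, add_comm R] at this

theorem inv_add_mul_smul_one_inv_mul [Field α] (C : Matrix n n α) (U : Matrix n p α)
    (V : Matrix p n α) {s : α} (hs : s ≠ 0) (hB : IsUnit (U * V + s • C⁻¹)) :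
    (C⁻¹ + U * (s • (1 : Matrix p p α))⁻¹ * V)⁻¹ = s • (U * V + s • C⁻¹)⁻¹ := by
  let := invertibleOfNonzero hs
  let := invertibleOfNonzero (inv_ne_zero hs)
  have : C⁻¹ + U * (s • (1 : Matrix p p α))⁻¹ * V = s⁻¹ • (U * V + s • C⁻¹) := by
    rw [inv_smul _ s (by simp), inv_one, smul_add, smul_smul, inv_mul_cancel₀ hs, one_smul]
    simp [add_comm]
  rw [this, inv_smul _ _ ((isUnit_iff_isUnit_det _).1 hB)]
  simp

theorem log_det_smul_inv {B : Matrix n n ℝ} (hB : 0 < B.det) {c : ℝ} (hc : 0 < c) :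
    Real.log (c • B⁻¹).det = Fintype.card n * Real.log c - Real.log B.det := by
  rw [det_smul, det_nonsing_inv, Ring.inverse_eq_inv, Real.log_mul (by positivity)
    (inv_ne_zero hB.ne'), Real.log_pow, Real.log_inv, sub_eq_add_neg]

end Matrix

/-- Closed formula for the log-det estimation error of the Kalman filter:
`log det(C - C Oᵀ (O C Oᵀ + σ² I)⁻¹ O C) = 2 m log σ - log det(Oᵀ O + σ² C⁻¹)`. -/
theorem logdet_error_covariance
    {m p : ℕ} (C : Matrix (Fin m) (Fin m) ℝ) (O : Matrix (Fin p) (Fin m) ℝ)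
    (σ : ℝ) (hC : C.PosDef) (hσ : 0 < σ) :
    Real.log (C - C * Oᵀ * (O * C * Oᵀ + σ ^ 2 • (1 : Matrix (Fin p) (Fin p) ℝ))⁻¹ * O * C).det
      = 2 * m * Real.log σ - Real.log (Oᵀ * O + σ ^ 2 • C⁻¹).det := by
  have hσ2 : 0 < σ ^ 2 := by positivity
  have hS : (O * C * Oᵀ + σ ^ 2 • (1 : Matrix (Fin p) (Fin p) ℝ)).PosDef := by
    simpa using PosDef.posSemidef_add (hC.posSemidef.mul_mul_conjTranspose_same O)
      (PosDef.one.smul hσ2)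
  have hB : (Oᵀ * O + σ ^ 2 • C⁻¹).PosDef := by
    simpa using PosDef.posSemidef_add (posSemidef_conjTranspose_mul_self O) (hC.inv.smul hσ2)
  rw [← inv_add_mul_inv_mul_eq_sub C Oᵀ _ O hC.isUnit (PosDef.one.smul hσ2).isUnit hS.isUnit,
    inv_add_mul_smul_one_inv_mul C Oᵀ O hσ2.ne' hB.isUnit, log_det_smul_inv hB.det_pos hσ2,
    Real.log_pow, Fintype.card_fin]
  push_cast
  ring
end

section
/- Let M₁, ..., Mₙ be n×n positive semidefinite matrices and Cbar an n×n positive definite matrix. The set function f(S) = log det(Cbar + Σ_{i∈S} Mᵢ) is submodular: for all S ⊆ S' ⊆ {1,...,n} and a ∉ S', f(S ∪ {a}) − f(S) ≥ f(S' ∪ {a}) − f(S'). -/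
/-!
Write `A = Cbar + ∑_{i ∈ S} Mᵢ`, `P = ∑_{i ∈ S' \ S} Mᵢ ⪰ 0` and `M a = Rᴴ R`. By the matrix
determinant lemma the gain of adding `M a` to a positive definite `X` is
`log det (X + Rᴴ R) - log det X = log det (1 + R X⁻¹ Rᴴ)`. Matrix inversion is antitone in the
Loewner order, so `R (A + P)⁻¹ Rᴴ ⪯ R A⁻¹ Rᴴ`, and `det` is monotone on positive definite
matrices because `det (X + Rᴴ R) = det X · det (1 + R X⁻¹ Rᴴ)` with the last factor `≥ 1`.
-/

open Matrix

namespace Matrix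
variable {k : Type*} [Fintype k] [DecidableEq k]

lemma PosSemidef.one_le_det_one_add {W : Matrix k k ℝ} (hW : W.PosSemidef) :
    1 ≤ (1 + W).det := by
  set U := hW.1.eigenvectorUnitary
  have hconj :
      1 + W = Unitary.conjStarAlgAut ℝ _ U (diagonal fun i ↦ 1 + hW.1.eigenvalues i) := by
    conv_lhs => rw [hW.1.spectral_theorem]
    rw [← map_one (Unitary.conjStarAlgAut ℝ _ U), ← map_add, ← diagonal_one, diagonal_add]
    rfl
  rw [hconj, Unitary.conjStarAlgAut_apply, det_mul_right_comm, Unitary.mul_star_self_of_mem U.2,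
    one_mul, det_diagonal]
  exact Finset.one_le_prod fun i _ ↦ by linarith [hW.eigenvalues_nonneg i]

open scoped MatrixOrder in
lemma PosSemidef.exists_eq_conjTranspose_mul_self {D : Matrix k k ℝ} (hD : D.PosSemidef) :
    ∃ R : Matrix k k ℝ, D = Rᴴ * R :=
  ⟨CFC.sqrt D, by rw [(CFC.sqrt_nonneg D).posSemidef.isHermitian.eq,
    CFC.sqrt_mul_sqrt_self D hD.nonneg]⟩

lemma PosDef.det_le_det_add {A P : Matrix k k ℝ} (hA : A.PosDef) (hP : P.PosSemidef) :
    A.det ≤ (A + P).det := by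
  obtain ⟨R, rfl⟩ := hP.exists_eq_conjTranspose_mul_self
  rw [det_add_mul _ _ hA.det_pos.ne'.isUnit]
  exact le_mul_of_one_le_right hA.det_pos.le
    (hA.inv.posSemidef.mul_mul_conjTranspose_same R).one_le_det_one_add

lemma PosDef.inv_sub_inv_add_posSemidef {A P : Matrix k k ℝ} (hA : A.PosDef) (hP : P.PosSemidef) :
    (A⁻¹ - (A + P)⁻¹).PosSemidef := by
  set B := A + P with hBdef
  have hB : B.PosDef := hA.add_posSemidef hP
  have hAu : IsUnit A.det := hA.det_pos.ne'.isUnit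
  have hBu : IsUnit B.det := hB.det_pos.ne'.isUnit
  have key : A⁻¹ - B⁻¹ = B⁻¹ * P * B⁻¹ᴴ + (B⁻¹ * P) * A⁻¹ * (B⁻¹ * P)ᴴ := by
    rw [conjTranspose_mul, hP.isHermitian.eq, hB.isHermitian.inv.eq]
    calc A⁻¹ - B⁻¹ = B⁻¹ * (B - A) * A⁻¹ := by
          rw [mul_sub, sub_mul, nonsing_inv_mul _ hBu, one_mul,
            mul_nonsing_inv_cancel_right _ _ hAu]
      _ = B⁻¹ * P * (A⁻¹ * B) * B⁻¹ := by
          rw [mul_assoc _ (A⁻¹ * B), mul_assoc A⁻¹, mul_nonsing_inv _ hBu, mul_one, hBdef,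
            add_sub_cancel_left]
      _ = _ := by rw [hBdef, mul_add A⁻¹, nonsing_inv_mul _ hAu]; noncomm_ring
  rw [key]
  exact (hP.mul_mul_conjTranspose_same B⁻¹).add
    (hA.inv.posSemidef.mul_mul_conjTranspose_same (B⁻¹ * P))

lemma PosDef.log_det_add_conjTranspose_mul_self_sub {A : Matrix k k ℝ} (hA : A.PosDef)
    (R : Matrix k k ℝ) :
    Real.log (A + Rᴴ * R).det - Real.log A.det = Real.log (1 + R * A⁻¹ * Rᴴ).det := by
  have hdet : (1 + R * A⁻¹ * Rᴴ).det ≠ 0 :=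
    (zero_lt_one.trans_le (hA.inv.posSemidef.mul_mul_conjTranspose_same R).one_le_det_one_add).ne'
  rw [det_add_mul _ _ hA.det_pos.ne'.isUnit, Real.log_mul hA.det_pos.ne' hdet, add_sub_cancel_left]

lemma PosDef.log_det_add_add_sub_le {A P D : Matrix k k ℝ} (hA : A.PosDef) (hP : P.PosSemidef)
    (hD : D.PosSemidef) :
    Real.log (A + P + D).det - Real.log (A + P).det ≤ Real.log (A + D).det - Real.log A.det := by
  obtain ⟨R, rfl⟩ := hD.exists_eq_conjTranspose_mul_self
  have hB : (A + P).PosDef := hA.add_posSemidef hP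
  rw [hA.log_det_add_conjTranspose_mul_self_sub, hB.log_det_add_conjTranspose_mul_self_sub]
  have hgainB : (R * (A + P)⁻¹ * Rᴴ).PosSemidef := hB.inv.posSemidef.mul_mul_conjTranspose_same R
  have hgap : (R * (A⁻¹ - (A + P)⁻¹) * Rᴴ).PosSemidef :=
    (hA.inv_sub_inv_add_posSemidef hP).mul_mul_conjTranspose_same R
  have hsplit : 1 + R * A⁻¹ * Rᴴ = 1 + R * (A + P)⁻¹ * Rᴴ + R * (A⁻¹ - (A + P)⁻¹) * Rᴴ := by
    noncomm_ring
  rw [hsplit]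
  exact Real.log_le_log (zero_lt_one.trans_le hgainB.one_le_det_one_add)
    ((PosDef.one.add_posSemidef hgainB).det_le_det_add hgap)

end Matrix

/-- The set function `f(S) = log det(Cbar + ∑_{i ∈ S} Mᵢ)` is submodular:
for `S ⊆ S'` and `a ∉ S'`, `f(S ∪ {a}) - f(S) ≥ f(S' ∪ {a}) - f(S')`. -/
theorem logdet_set_function_submodular
    {n m : ℕ} (M : Fin n → Matrix (Fin m) (Fin m) ℝ)
    (Cbar : Matrix (Fin m) (Fin m) ℝ)
    (hM : ∀ i, (M i).PosSemidef) (hC : Cbar.PosDef)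
    (S S' : Finset (Fin n)) (hSS' : S ⊆ S') (a : Fin n) (ha : a ∉ S') :
    Real.log (Cbar + ∑ i ∈ insert a S', M i).det
      - Real.log (Cbar + ∑ i ∈ S', M i).det
    ≤ Real.log (Cbar + ∑ i ∈ insert a S, M i).det
      - Real.log (Cbar + ∑ i ∈ S, M i).det := by
  have hsum : ∀ T, (∑ i ∈ T, M i).PosSemidef := fun T ↦ posSemidef_sum T fun i _ ↦ hM i
  have hS' : Cbar + ∑ i ∈ S', M i = (Cbar + ∑ i ∈ S, M i) + ∑ i ∈ S' \ S, M i := by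
    rw [← Finset.sum_sdiff hSS', add_assoc, add_comm (∑ i ∈ S' \ S, M i)]
  have hinsert : ∀ T, a ∉ T → Cbar + ∑ i ∈ insert a T, M i = Cbar + ∑ i ∈ T, M i + M a :=
    fun T haT ↦ by rw [Finset.sum_insert haT, add_comm (M a), add_assoc]
  rw [hinsert S' ha, hinsert S (fun h ↦ ha (hSS' h)), hS']
  exact (hC.add_posSemidef (hsum S)).log_det_add_add_sub_le (hsum _) (hM a)
end

section
/- Let M₁, ..., Mₙ be m×m positive semidefinite matrices and Cbar an m×m positive definite matrix. The set function g(S) = −log det(Cbar + Σ_{i∈S} Mᵢ) (the log-det estimation error up to an additive constant) is supermodular and non-increasing in S. -/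
/-!
Write `P_S = Cbar + ∑_{i ∈ S} Mᵢ`. Since `P_{S'} = P_S + D` with `D = ∑_{i ∈ S' \ S} Mᵢ ⪰ 0`,
both claims are statements about the increment `log det (P + X) - log det P` of a positive
definite `P` by a positive semidefinite `X`: it is nonnegative and it decreases when `P` grows
to `P + D`. Splitting `X` into rank-one terms `v vᵀ`, each step adds, by the matrix determinant
lemma, `log (1 + vᵀ P⁻¹ v)`, and `vᵀ P⁻¹ v ≥ vᵀ (P + D)⁻¹ v` because `vᵀ P⁻¹ v` is the maximum of
`2 vᵀ x - xᵀ P x` over `x`.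
-/

open Matrix

namespace Matrix

variable {ι : Type*} [Fintype ι]

theorem det_add_vecMulVec [DecidableEq ι] {R : Type*} [CommRing R] {A : Matrix ι ι R}
    (hA : IsUnit A.det) (u v : ι → R) :
    (A + vecMulVec u v).det = A.det * (1 + v ⬝ᵥ (A⁻¹ *ᵥ u)) :=
  calc (A + vecMulVec u v).det = (A * (1 + vecMulVec (A⁻¹ *ᵥ u) v)).det := by
        rw [Matrix.mul_add, Matrix.mul_one, mul_vecMulVec, mulVec_mulVec, mul_nonsing_inv _ hA,
          one_mulVec]
    _ = A.det * (1 + v ⬝ᵥ (A⁻¹ *ᵥ u)) := by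
        rw [det_mul, vecMulVec_eq Unit, det_one_add_replicateCol_mul_replicateRow]

@[elab_as_elim]
theorem PosSemidef.induction_on_vecMulVec {p : Matrix ι ι ℝ → Prop} {X : Matrix ι ι ℝ}
    (hX : X.PosSemidef) (zero : p 0) (add : ∀ Y v, Y.PosSemidef → p Y → p (Y + vecMulVec v v)) :
    p X := by
  obtain ⟨k, v, rfl⟩ := posSemidef_iff_eq_sum_vecMulVec.mp hX
  clear hX
  simp only [star_trivial]
  induction k with
  | zero => simpa using zero
  | succ k ih =>
    rw [Fin.sum_univ_castSucc]
    refine add _ _ (posSemidef_sum _ fun i _ => ?_) (ih _)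
    simpa using posSemidef_vecMulVec_self_star (v i.castSucc)

variable [DecidableEq ι] {P D X : Matrix ι ι ℝ}

theorem PosDef.two_mul_dotProduct_sub_le (hP : P.PosDef) (v x : ι → ℝ) :
    2 * (v ⬝ᵥ x) - x ⬝ᵥ (P *ᵥ x) ≤ v ⬝ᵥ (P⁻¹ *ᵥ v) := by
  set y := P⁻¹ *ᵥ v
  have hPy : P *ᵥ y = v := by
    rw [mulVec_mulVec, mul_nonsing_inv _ hP.det_pos.ne'.isUnit, one_mulVec]
  have hsymm : y ⬝ᵥ (P *ᵥ x) = v ⬝ᵥ x := by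
    rw [dotProduct_mulVec, ← mulVec_transpose, ← conjTranspose_eq_transpose_of_trivial,
      hP.isHermitian.eq, hPy]
  have hsq : 0 ≤ (x - y) ⬝ᵥ (P *ᵥ (x - y)) := by
    simpa using hP.posSemidef.dotProduct_mulVec_nonneg (x - y)
  rw [mulVec_sub, hPy, sub_dotProduct, dotProduct_sub, dotProduct_sub, hsymm,
    dotProduct_comm x v, dotProduct_comm y v] at hsq
  linarith

theorem PosDef.dotProduct_inv_add_mulVec_le (hP : P.PosDef) (hD : D.PosSemidef) (v : ι → ℝ) :
    v ⬝ᵥ ((P + D)⁻¹ *ᵥ v) ≤ v ⬝ᵥ (P⁻¹ *ᵥ v) := by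
  set x := (P + D)⁻¹ *ᵥ v
  have hx : (P + D) *ᵥ x = v := by
    rw [mulVec_mulVec, mul_nonsing_inv _ (hP.add_posSemidef hD).det_pos.ne'.isUnit, one_mulVec]
  have hDx : 0 ≤ x ⬝ᵥ (D *ᵥ x) := by simpa using hD.dotProduct_mulVec_nonneg x
  have hvx : v ⬝ᵥ x = x ⬝ᵥ (P *ᵥ x) + x ⬝ᵥ (D *ᵥ x) := by
    rw [← hx, add_mulVec, dotProduct_comm, dotProduct_add]
  linarith [hP.two_mul_dotProduct_sub_le v x]

theorem PosDef.dotProduct_inv_mulVec_nonneg (hP : P.PosDef) (v : ι → ℝ) :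
    0 ≤ v ⬝ᵥ (P⁻¹ *ᵥ v) := by
  simpa using hP.inv.posSemidef.dotProduct_mulVec_nonneg v

theorem PosDef.log_det_add_vecMulVec_self (hP : P.PosDef) (v : ι → ℝ) :
    Real.log (P + vecMulVec v v).det = Real.log P.det + Real.log (1 + v ⬝ᵥ (P⁻¹ *ᵥ v)) := by
  rw [det_add_vecMulVec hP.det_pos.ne'.isUnit,
    Real.log_mul hP.det_pos.ne' (by linarith [hP.dotProduct_inv_mulVec_nonneg v])]

theorem PosDef.det_le_det_add_s9 (hP : P.PosDef) (hX : X.PosSemidef) : P.det ≤ (P + X).det := by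
  refine hX.induction_on_vecMulVec (by simp) fun Y v hY ih => ?_
  have hPY := hP.add_posSemidef hY
  rw [← add_assoc, det_add_vecMulVec hPY.det_pos.ne'.isUnit]
  exact ih.trans (le_mul_of_one_le_right hPY.det_pos.le
    (by linarith [hPY.dotProduct_inv_mulVec_nonneg v]))

theorem PosDef.log_det_add_add_sub_le_s9 (hP : P.PosDef) (hD : D.PosSemidef) (hX : X.PosSemidef) :
    Real.log (P + D + X).det - Real.log (P + D).det ≤ Real.log (P + X).det - Real.log P.det := by
  refine hX.induction_on_vecMulVec (by simp) fun Y v hY ih => ?_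
  have hPY := hP.add_posSemidef hY
  have hPDY : (P + D + Y).PosDef := by
    simpa only [add_right_comm] using hPY.add_posSemidef hD
  have hinv : v ⬝ᵥ ((P + D + Y)⁻¹ *ᵥ v) ≤ v ⬝ᵥ ((P + Y)⁻¹ *ᵥ v) := by
    simpa only [add_right_comm] using hPY.dotProduct_inv_add_mulVec_le hD v
  rw [← add_assoc, ← add_assoc, hPDY.log_det_add_vecMulVec_self,
    hPY.log_det_add_vecMulVec_self]
  have := Real.log_le_log (by linarith [hPDY.dotProduct_inv_mulVec_nonneg v])
    (show 1 + v ⬝ᵥ ((P + D + Y)⁻¹ *ᵥ v) ≤ 1 + v ⬝ᵥ ((P + Y)⁻¹ *ᵥ v) by linarith)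
  linarith

end Matrix

/-- The set function `g(S) = - log det(Cbar + ∑_{i ∈ S} Mᵢ)` (the log-det
estimation error up to an additive constant) is supermodular and
non-increasing in `S`. -/
theorem neg_logdet_supermodular_and_nonincreasing
    {n m : ℕ} (M : Fin n → Matrix (Fin m) (Fin m) ℝ)
    (Cbar : Matrix (Fin m) (Fin m) ℝ)
    (hM : ∀ i, (M i).PosSemidef) (hC : Cbar.PosDef) :
    (∀ S S' : Finset (Fin n), S ⊆ S' → ∀ a ∉ S',
        (- Real.log (Cbar + ∑ i ∈ insert a S, M i).det)
          - (- Real.log (Cbar + ∑ i ∈ S, M i).det)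
        ≤ (- Real.log (Cbar + ∑ i ∈ insert a S', M i).det)
          - (- Real.log (Cbar + ∑ i ∈ S', M i).det)) ∧
    (∀ S S' : Finset (Fin n), S ⊆ S' →
        - Real.log (Cbar + ∑ i ∈ S', M i).det
          ≤ - Real.log (Cbar + ∑ i ∈ S, M i).det) := by
  have hsum (S : Finset (Fin n)) : (∑ i ∈ S, M i).PosSemidef := posSemidef_sum S fun i _ => hM i
  have hpos (S : Finset (Fin n)) : (Cbar + ∑ i ∈ S, M i).PosDef := hC.add_posSemidef (hsum S)
  have hsplit {S S' : Finset (Fin n)} (h : S ⊆ S') :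
      Cbar + ∑ i ∈ S', M i = Cbar + ∑ i ∈ S, M i + ∑ i ∈ S' \ S, M i := by
    rw [← Finset.sum_sdiff h, add_comm (∑ i ∈ S' \ S, M i), add_assoc]
  have hinsert {S : Finset (Fin n)} {a : Fin n} (ha : a ∉ S) :
      Cbar + ∑ i ∈ insert a S, M i = Cbar + ∑ i ∈ S, M i + M a := by
    rw [Finset.sum_insert ha, add_comm (M a), add_assoc]
  refine ⟨fun S S' hSS' a ha => ?_, fun S S' hSS' => ?_⟩
  · have := (hpos S).log_det_add_add_sub_le_s9 (hsum (S' \ S)) (hM a)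
    rw [hinsert (fun h => ha (hSS' h)), hinsert ha, hsplit hSS']
    linarith
  · rw [hsplit hSS']
    linarith [Real.log_le_log (hpos S).det_pos ((hpos S).det_le_det_add_s9 (hsum (S' \ S)))]
end

section
/- Let t ↦ O(t) be the matrix path O(t) = Cbar + O₁ + t(O₂ − O₁) for t ∈ [0,1], where Cbar ≻ 0 and 0 ⪯ O₁ ⪯ O₂. Then for any positive semidefinite matrix Oa, the function hbar(t) = log det(O(t) + Oa) − log det(O(t)) is non-increasing in t on [0,1]; in particular log det(Cbar + O₂ + Oa) − log det(Cbar + O₂) ≤ log det(Cbar + O₁ + Oa) − log det(Cbar + O₁). -/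
/-!
Write `Oa = Cᴴ C`. By the matrix determinant lemma,
`log det (X + Oa) - log det X = log det (1 + C X⁻¹ Cᴴ)` for `X ≻ 0`.
Inversion is antitone and `det` is monotone in the Loewner order on positive definite matrices,
so this quantity is antitone in `X`; and `t ↦ O(t)` is Loewner-monotone.
-/

open Matrix
open scoped MatrixOrder ComplexOrder

namespace Matrix

variable {m 𝕜 : Type*} [Fintype m] [DecidableEq m] [RCLike 𝕜]

lemma PosSemidef.exists_eq_conjTranspose_mul_self_s11 {P : Matrix m m 𝕜} (hP : P.PosSemidef) :
    ∃ C : Matrix m m 𝕜, P = Cᴴ * C :=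
  ⟨CFC.sqrt P, by rw [(CFC.sqrt_nonneg P).posSemidef.1.eq, CFC.sqrt_mul_sqrt_self P hP.nonneg]⟩

/-- Both Schur complements of `[B 1; 1 A⁻¹]`, namely `B - A` and `A⁻¹ - B⁻¹`, characterise its
positive semidefiniteness. -/
lemma PosDef.inv_anti {A B : Matrix m m 𝕜} (hA : A.PosDef) (hAB : A ≤ B) : B⁻¹ ≤ A⁻¹ := by
  have hB : B.PosDef := by simpa using hA.add_posSemidef hAB
  let _ := hB.isUnit.invertible
  let _ := hA.isUnit.invertible
  let _ := hA.inv.isUnit.invertible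
  have h₁ := PosDef.fromBlocks₁₁ (1 : Matrix m m 𝕜) A⁻¹ hB
  have h₂ := PosDef.fromBlocks₂₂ B (1 : Matrix m m 𝕜) hA.inv
  simp only [conjTranspose_one, Matrix.one_mul, Matrix.mul_one,
    Matrix.inv_inv_of_invertible] at h₁ h₂
  exact h₁.1 (h₂.2 hAB)

lemma one_le_det {M : Matrix m m ℝ} (h : 1 ≤ M) : 1 ≤ M.det := by
  have hM : M.IsHermitian := by simpa using isHermitian_one.add (le_iff.1 h).1
  have h_spec := (algebraMap_le_iff_le_spectrum (r := (1 : ℝ)) hM).1 (by simpa using h)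
  rw [hM.det_eq_prod_eigenvalues]
  exact Finset.one_le_prod fun i _ => by
    simpa using h_spec _ (hM.eigenvalues_mem_spectrum_real i)

lemma PosDef.one_add_mul_inv_mul_conjTranspose {X : Matrix m m 𝕜} (hX : X.PosDef)
    (C : Matrix m m 𝕜) : (1 + C * X⁻¹ * Cᴴ).PosDef :=
  PosDef.one.add_posSemidef (hX.inv.posSemidef.mul_mul_conjTranspose_same C)

lemma PosDef.det_mono {A B : Matrix m m ℝ} (hA : A.PosDef) (hAB : A ≤ B) : A.det ≤ B.det := by
  obtain ⟨C, hC⟩ := (le_iff.1 hAB).exists_eq_conjTranspose_mul_self_s11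
  have h_one : 1 ≤ 1 + C * A⁻¹ * Cᴴ :=
    le_add_of_nonneg_right (hA.inv.posSemidef.mul_mul_conjTranspose_same C).nonneg
  rw [show B = A + Cᴴ * C by rw [← hC]; abel, det_add_mul _ _ hA.det_pos.ne'.isUnit]
  exact le_mul_of_one_le_right hA.det_pos.le (one_le_det h_one)

lemma PosDef.log_det_add_conjTranspose_mul_self_sub_log_det {X : Matrix m m ℝ} (hX : X.PosDef)
    (C : Matrix m m ℝ) :
    Real.log (X + Cᴴ * C).det - Real.log X.det = Real.log (1 + C * X⁻¹ * Cᴴ).det := by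
  rw [det_add_mul _ _ hX.det_pos.ne'.isUnit, Real.log_mul hX.det_pos.ne'
    (hX.one_add_mul_inv_mul_conjTranspose C).det_pos.ne', add_sub_cancel_left]

theorem antitoneOn_log_det_add_sub_log_det {P : Matrix m m ℝ} (hP : P.PosSemidef) :
    AntitoneOn (fun X : Matrix m m ℝ => Real.log (X + P).det - Real.log X.det)
      {X | X.PosDef} := by
  obtain ⟨C, rfl⟩ := hP.exists_eq_conjTranspose_mul_self_s11
  intro A hA B hB hAB
  simp only [hA.log_det_add_conjTranspose_mul_self_sub_log_det,
    hB.log_det_add_conjTranspose_mul_self_sub_log_det]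
  have hB_one := hB.one_add_mul_inv_mul_conjTranspose C
  refine Real.log_le_log hB_one.det_pos (hB_one.det_mono ?_)
  gcongr 1 + ?_
  exact star_right_conjugate_le_conjugate (hA.inv_anti hAB) C

end Matrix

theorem logdet_increment_nonincreasing_along_path_general
    {n : ℕ} (Cbar O₁ O₂ Oa : Matrix (Fin n) (Fin n) ℝ)
    (hC : Cbar.PosDef) (hO₁ : O₁.PosSemidef)
    (h₁₂ : (O₂ - O₁).PosSemidef) (hOa : Oa.PosSemidef) :
    (∀ s t : ℝ, 0 ≤ s → s ≤ t → t ≤ 1 →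
      Real.log ((Cbar + O₁ + t • (O₂ - O₁)) + Oa).det
        - Real.log (Cbar + O₁ + t • (O₂ - O₁)).det
      ≤ Real.log ((Cbar + O₁ + s • (O₂ - O₁)) + Oa).det
        - Real.log (Cbar + O₁ + s • (O₂ - O₁)).det) ∧
    Real.log (Cbar + O₂ + Oa).det - Real.log (Cbar + O₂).det
      ≤ Real.log (Cbar + O₁ + Oa).det - Real.log (Cbar + O₁).det := by
  have h_posDef (s : ℝ) (hs : 0 ≤ s) : (Cbar + O₁ + s • (O₂ - O₁)).PosDef := by
    rw [add_assoc]
    exact hC.add_posSemidef (hO₁.add (h₁₂.smul hs))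
  have h_mono {s t : ℝ} (hst : s ≤ t) :
      Cbar + O₁ + s • (O₂ - O₁) ≤ Cbar + O₁ + t • (O₂ - O₁) := by
    gcongr
    exact nonneg_iff_posSemidef.2 h₁₂
  have h_anti (s t : ℝ) (hs : 0 ≤ s) (hst : s ≤ t) (_ : t ≤ 1) :=
    antitoneOn_log_det_add_sub_log_det hOa (h_posDef s hs) (h_posDef t (hs.trans hst)) (h_mono hst)
  refine ⟨h_anti, ?_⟩
  simpa using h_anti 0 1 le_rfl zero_le_one le_rfl

/-- Along the path `O(t) = Cbar + O₁ + t (O₂ - O₁)`, with `Cbar ≻ 0` and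
`0 ⪯ O₁ ⪯ O₂`, the function
`hbar(t) = log det(O(t) + Oa) - log det(O(t))` is non-increasing on `[0,1]`;
in particular
`log det(Cbar + O₂ + Oa) - log det(Cbar + O₂)
  ≤ log det(Cbar + O₁ + Oa) - log det(Cbar + O₁)`. -/
theorem logdet_increment_nonincreasing_along_path
    {n : ℕ} (Cbar O₁ O₂ Oa : Matrix (Fin n) (Fin n) ℝ)
    (hC : Cbar.PosDef) (hO₁ : O₁.PosSemidef) (hO₂ : O₂.PosSemidef)
    (h₁₂ : (O₂ - O₁).PosSemidef) (hOa : Oa.PosSemidef) :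
    (∀ s t : ℝ, 0 ≤ s → s ≤ t → t ≤ 1 →
      Real.log ((Cbar + O₁ + t • (O₂ - O₁)) + Oa).det
        - Real.log (Cbar + O₁ + t • (O₂ - O₁)).det
      ≤ Real.log ((Cbar + O₁ + s • (O₂ - O₁)) + Oa).det
        - Real.log (Cbar + O₁ + s • (O₂ - O₁)).det) ∧
    Real.log (Cbar + O₂ + Oa).det - Real.log (Cbar + O₂).det
      ≤ Real.log (Cbar + O₁ + Oa).det - Real.log (Cbar + O₁).det :=
  logdet_increment_nonincreasing_along_path_general Cbar O₁ O₂ Oa hC hO₁ h₁₂ hOa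
end

section
/- Consider the system x_{k+1} = A_k x_k + w_k, y_k = C x_k + v_k with uncorrelated zero-mean noises, Cov(v_k) = σ² I, σ > 0, and Cov(x₀) ≻ 0 with maximal diagonal entry of Cov(x₀)⁻¹ equal to σ₀⁻². Let μ = max_{m∈[0,k]} ‖A_m‖₂ with μ ≠ 1, and let S be the sensor set (C selects |S| coordinates). Then the minimum mean square error of the optimal linear estimate of x₀ from y₀,...,y_k satisfies mmse(x₀) ≥ n σ² / (|S| (1 − μ^{2(k+1)})/(1 − μ²) + σ² σ₀⁻²). -/
/-!
The observability Gramian `Õ = ∑ₘ Φₘᵀ Cᵀ C Φₘ` has trace `∑ₘ ∑_{i ∈ S} ∑ⱼ (Φₘ)ᵢⱼ²`, and every entry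
of `Φₘ` is bounded by `‖Φₘ‖₂ ≤ μᵐ`, so `tr Õ ≤ n |S| ∑ₘ μ²ᵐ`; likewise `tr Cov(x₀)⁻¹ ≤ n σ₀⁻²`.
For a positive definite `M`, Cauchy–Schwarz applied to `n = tr (M^{1/2} M^{-1/2})` gives
`n² ≤ tr M · tr M⁻¹`, so `tr M ≤ n D` forces `tr M⁻¹ ≥ n / D`.
-/

open Matrix

/-- Spectral norm (operator 2-norm) of a real square matrix. -/
noncomputable def specNorm {n : ℕ} (A : Matrix (Fin n) (Fin n) ℝ) : ℝ :=
  ‖(Matrix.toEuclideanCLM (𝕜 := ℝ) (n := Fin n)) A‖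

namespace Matrix

variable {m n : Type*}

theorem posSemidef_sum_single_one [DecidableEq m] (S : Finset m) :
    (∑ i ∈ S, single i i (1 : ℝ)).PosSemidef :=
  posSemidef_sum S fun i _ ↦
    diagonal_single i (1 : ℝ) ▸ PosSemidef.diagonal (Pi.single_nonneg.mpr zero_le_one)

variable [Fintype m] [Fintype n]

theorem trace_transpose_mul_sq_le (A B : Matrix m n ℝ) :
    (Aᵀ * B).trace ^ 2 ≤ (Aᵀ * A).trace * (Bᵀ * B).trace := by
  simp only [← vec_dotProduct_vec, dotProduct, ← sq]
  exact Finset.sum_mul_sq_le_sq_mul_sq _ _ _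

theorem trace_le_card_mul_of_diag_le {A : Matrix n n ℝ} {c : ℝ} (h : ∀ i, A i i ≤ c) :
    A.trace ≤ Fintype.card n * c :=
  calc A.trace ≤ ∑ _i : n, c := Finset.sum_le_sum fun i _ ↦ h i
    _ = Fintype.card n * c := by simp

variable [DecidableEq m]

theorem trace_transpose_mul_sum_single_mul (P : Matrix m n ℝ) (S : Finset m) :
    (Pᵀ * (∑ i ∈ S, single i i (1 : ℝ)) * P).trace = ∑ i ∈ S, ∑ j, P i j ^ 2 := by
  rw [trace_mul_cycle, Finset.mul_sum, trace_sum]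
  simp [trace_mul_single, mul_apply, sq]

open scoped MatrixOrder in
theorem PosDef.sq_card_le_trace_mul_trace_inv {M : Matrix m m ℝ} (hM : M.PosDef) :
    (Fintype.card m : ℝ) ^ 2 ≤ M.trace * M⁻¹.trace := by
  set R := CFC.sqrt M
  have hRR : R * R = M := CFC.sqrt_mul_sqrt_self M hM.posSemidef.nonneg
  have hR : Rᵀ = R := (CFC.sqrt_nonneg M).isSelfAdjoint
  have hRu : IsUnit R.det :=
    isUnit_iff_ne_zero.mpr fun h ↦ hM.det_pos.ne' (by rw [← hRR, det_mul, h, zero_mul])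
  have := trace_transpose_mul_sq_le R R⁻¹
  rwa [hR, mul_nonsing_inv _ hRu, trace_one, transpose_nonsing_inv, hR, hRR, ← mul_inv_rev,
    hRR] at this

theorem PosDef.card_div_le_trace_inv {M : Matrix m m ℝ} (hM : M.PosDef) {D : ℝ} (hD : 0 < D)
    (htr : M.trace ≤ Fintype.card m * D) : Fintype.card m / D ≤ M⁻¹.trace := by
  rw [div_le_iff₀ hD]
  have ht := hM.inv.posSemidef.trace_nonneg
  nlinarith [hM.sq_card_le_trace_mul_trace_inv, mul_le_mul_of_nonneg_right htr ht,
    mul_nonneg ht hD.le]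

end Matrix

section specNorm

variable {n : ℕ}

theorem specNorm_nonneg (A : Matrix (Fin n) (Fin n) ℝ) : 0 ≤ specNorm A :=
  norm_nonneg _

theorem specNorm_mul_le (A B : Matrix (Fin n) (Fin n) ℝ) :
    specNorm (A * B) ≤ specNorm A * specNorm B :=
  l2_opNorm_mul A B

theorem specNorm_one_le : specNorm (1 : Matrix (Fin n) (Fin n) ℝ) ≤ 1 := by
  rw [specNorm, map_one]
  exact ContinuousLinearMap.norm_id_le

theorem abs_apply_le_specNorm (A : Matrix (Fin n) (Fin n) ℝ) (i j : Fin n) :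
    |A i j| ≤ specNorm A :=
  calc |A i j| = ‖toEuclideanCLM (𝕜 := ℝ) A (EuclideanSpace.single j 1) i‖ := by
        simp [EuclideanSpace.single]
    _ ≤ ‖toEuclideanCLM (𝕜 := ℝ) A (EuclideanSpace.single j 1)‖ := PiLp.norm_apply_le _ _
    _ ≤ specNorm A := by
        simpa [specNorm] using (toEuclideanCLM (𝕜 := ℝ) A).le_opNorm (EuclideanSpace.single j 1)

theorem specNorm_le_pow_of_forall_le {N : ℕ} {A Φ : ℕ → Matrix (Fin n) (Fin n) ℝ} {μ : ℝ}
    (hΦ0 : Φ 0 = 1) (hΦ : ∀ m, Φ (m + 1) = A m * Φ m) (hμ0 : 0 ≤ μ)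
    (hA : ∀ m < N, specNorm (A m) ≤ μ) : ∀ m ≤ N, specNorm (Φ m) ≤ μ ^ m := by
  intro m hm
  induction m with
  | zero => simpa [hΦ0] using specNorm_one_le
  | succ m ih =>
    calc specNorm (Φ (m + 1)) ≤ specNorm (A m) * specNorm (Φ m) := hΦ m ▸ specNorm_mul_le _ _
      _ ≤ μ * μ ^ m := by gcongr; exacts [specNorm_nonneg _, hA m hm, ih (by omega)]
      _ = μ ^ (m + 1) := by ring

theorem trace_transpose_mul_sum_single_mul_le (P : Matrix (Fin n) (Fin n) ℝ)
    (S : Finset (Fin n)) :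
    (Pᵀ * (∑ i ∈ S, single i i (1 : ℝ)) * P).trace ≤ n * S.card * specNorm P ^ 2 := by
  rw [trace_transpose_mul_sum_single_mul]
  calc ∑ i ∈ S, ∑ j, P i j ^ 2 ≤ ∑ i ∈ S, ∑ j : Fin n, specNorm P ^ 2 :=
        Finset.sum_le_sum fun i _ ↦ Finset.sum_le_sum fun j _ ↦
          sq_le_sq.mpr ((abs_apply_le_specNorm P i j).trans (le_abs_self _))
    _ = n * S.card * specNorm P ^ 2 := by
        simp only [Finset.sum_const, Finset.card_univ, Fintype.card_fin, nsmul_eq_mul]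
        ring

end specNorm

def obsGramian {ι : Type*} [Fintype ι] [DecidableEq ι] (Φ : ℕ → Matrix ι ι ℝ) (S : Finset ι)
    (k : ℕ) : Matrix ι ι ℝ :=
  ∑ m ∈ Finset.range (k + 1), (Φ m)ᵀ * (∑ i ∈ S, single i i (1 : ℝ)) * Φ m

theorem posSemidef_obsGramian {ι : Type*} [Fintype ι] [DecidableEq ι] (Φ : ℕ → Matrix ι ι ℝ)
    (S : Finset ι) (k : ℕ) : (obsGramian Φ S k).PosSemidef :=
  posSemidef_sum _ fun m _ ↦ by
    simpa using (posSemidef_sum_single_one S).conjTranspose_mul_mul_same (Φ m)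

theorem trace_obsGramian_le {n k : ℕ} {A Φ : ℕ → Matrix (Fin n) (Fin n) ℝ} {μ : ℝ}
    (hΦ0 : Φ 0 = 1) (hΦ : ∀ m, Φ (m + 1) = A m * Φ m) (hμ0 : 0 ≤ μ)
    (hA : ∀ m ≤ k, specNorm (A m) ≤ μ) (S : Finset (Fin n)) :
    (obsGramian Φ S k).trace ≤ n * (S.card * ∑ m ∈ Finset.range (k + 1), (μ ^ 2) ^ m) := by
  rw [obsGramian, trace_sum, Finset.mul_sum, Finset.mul_sum]
  refine Finset.sum_le_sum fun m hm ↦ ?_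
  have hΦm := specNorm_le_pow_of_forall_le hΦ0 hΦ hμ0 (fun m hm ↦ hA m hm.le) m
    (Nat.lt_succ_iff.mp (Finset.mem_range.mp hm))
  calc _ ≤ n * S.card * specNorm (Φ m) ^ 2 := trace_transpose_mul_sum_single_mul_le _ _
    _ ≤ n * S.card * (μ ^ m) ^ 2 := by gcongr; exact specNorm_nonneg _
    _ = n * (S.card * (μ ^ 2) ^ m) := by ring

theorem geom_sum_sq_eq {μ : ℝ} (hμ0 : 0 ≤ μ) (hμ1 : μ ≠ 1) (k : ℕ) :
    ∑ m ∈ Finset.range k, (μ ^ 2) ^ m = (1 - μ ^ (2 * k)) / (1 - μ ^ 2) := by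
  rw [geom_sum_eq ((pow_eq_one_iff_of_nonneg hμ0 two_ne_zero).not.mpr hμ1), ← neg_div_neg_eq,
    neg_sub, neg_sub, pow_mul]

/-- Fundamental lower bound on the minimum mean square error of the Kalman
filter estimate of `x₀` from `y₀, ..., y_k`:  with `Φ₀ = I`,
`Φ_{m+1} = A_m Φ_m`, sensor set `S` (so `Cᵀ C = ∑_{i ∈ S} eᵢ eᵢᵀ`),
observability Gramian `Õ_k = ∑_{m=0}^{k} Φ_mᵀ (∑_{i∈S} eᵢ eᵢᵀ) Φ_m`,
`μ = max ‖A_m‖₂ ≠ 1`, `σ₀⁻²` an upper bound on the diagonal of `Cov(x₀)⁻¹`,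
and `mmse(x₀) ≥ σ² tr[(Õ_k + σ² Cov(x₀)⁻¹)⁻¹]` (the zero-process-noise error),
we have `mmse(x₀) ≥ n σ² / (|S| (1 - μ^{2(k+1)})/(1 - μ²) + σ² σ₀⁻²)`. -/
theorem mmse_lower_bound
    {n : ℕ} (k : ℕ) (A : ℕ → Matrix (Fin n) (Fin n) ℝ)
    (Φ : ℕ → Matrix (Fin n) (Fin n) ℝ)
    (hΦ0 : Φ 0 = 1) (hΦ : ∀ m, Φ (m + 1) = A m * Φ m)
    (μ : ℝ) (hμ0 : 0 ≤ μ) (hμ1 : μ ≠ 1) (hA : ∀ m ≤ k, specNorm (A m) ≤ μ)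
    (σ : ℝ) (hσ : 0 < σ)
    (C₀ : Matrix (Fin n) (Fin n) ℝ) (hC₀ : C₀.PosDef)
    (σ0inv2 : ℝ) (hσ0 : ∀ i, C₀⁻¹ i i ≤ σ0inv2)
    (S : Finset (Fin n))
    (mmse : ℝ)
    (hmmse : σ ^ 2 *
        ((∑ m ∈ Finset.range (k + 1),
            (Φ m)ᵀ * (∑ i ∈ S, Matrix.single i i (1 : ℝ)) * Φ m)
          + σ ^ 2 • C₀⁻¹)⁻¹.trace ≤ mmse) :
    (n : ℝ) * σ ^ 2 /
        ((S.card : ℝ) * ((1 - μ ^ (2 * (k + 1))) / (1 - μ ^ 2))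
          + σ ^ 2 * σ0inv2)
      ≤ mmse := by
  obtain rfl | hn := n.eq_zero_or_pos
  · simpa [trace] using hmmse
  change σ ^ 2 * (obsGramian Φ S k + σ ^ 2 • C₀⁻¹)⁻¹.trace ≤ mmse at hmmse
  rw [← geom_sum_sq_eq hμ0 hμ1]
  set M := obsGramian Φ S k + σ ^ 2 • C₀⁻¹
  set D := (S.card : ℝ) * ∑ m ∈ Finset.range (k + 1), (μ ^ 2) ^ m + σ ^ 2 * σ0inv2
  have hM : M.PosDef := PosDef.posSemidef_add (posSemidef_obsGramian Φ S k)
    (hC₀.inv.smul (by positivity))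
  have hD : 0 < D := by
    have hσ0pos : 0 < σ0inv2 := hC₀.inv.diag_pos.trans_le (hσ0 ⟨0, hn⟩)
    positivity
  have htrM : M.trace ≤ n * D :=
    calc M.trace = (obsGramian Φ S k).trace + σ ^ 2 * C₀⁻¹.trace := by
          rw [trace_add, trace_smul, smul_eq_mul]
      _ ≤ n * (S.card * ∑ m ∈ Finset.range (k + 1), (μ ^ 2) ^ m) + σ ^ 2 * (n * σ0inv2) := by
          gcongr
          · exact trace_obsGramian_le hΦ0 hΦ hμ0 hA S
          · simpa using trace_le_card_mul_of_diag_le hσ0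
      _ = n * D := by ring
  calc n * σ ^ 2 / D = σ ^ 2 * (n / D) := by ring
    _ ≤ σ ^ 2 * M⁻¹.trace := by
        gcongr
        simpa using hM.card_div_le_trace_inv hD (by simpa using htrM)
    _ ≤ mmse := hmmse
end
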